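/- arXiv:1508.04322 — 6 statements merged into one kernel-verified Lean document; each statement's English description precedes it below -/
import Mathlib

section
/- The square J² of the kernel J of the multiplication map B ⊗ B → B is generated as an ideal by the elements 1 ⊗ (ab) + (ab) ⊗ 1 − a ⊗ b − b ⊗ a for a, b ∈ B. -/
open TensorProduct

theorem stmt_8 (k B : Type*) [CommRing k] [CommRing B] [Algebra k B] :
    (RingHom.ker (Algebra.TensorProduct.lmul' k (S := B)).toRingHom) ^ 2 =
      Ideal.span {x : B ⊗[k] B | ∃ a b : B,
        x = 1 ⊗ₜ[k] (a * b) + (a * b) ⊗ₜ[k] 1 - a ⊗ₜ[k] b - b ⊗ₜ[k] a} := by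
  have h : (RingHom.ker (Algebra.TensorProduct.lmul' k (S := B)).toRingHom)
      = KaehlerDifferential.ideal k B := rfl
  rw [h, ← KaehlerDifferential.span_range_eq_ideal, pow_two, Ideal.span_mul_span']
  congr 1
  ext x
  constructor
  · rintro ⟨_, ⟨a, rfl⟩, _, ⟨b, rfl⟩, rfl⟩
    refine ⟨a, b, ?_⟩
    simp only [sub_mul, mul_sub, Algebra.TensorProduct.tmul_mul_tmul, one_mul, mul_one]
    ring
  · rintro ⟨a, b, rfl⟩
    refine ⟨_, ⟨a, rfl⟩, _, ⟨b, rfl⟩, ?_⟩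
    simp only [sub_mul, mul_sub, Algebra.TensorProduct.tmul_mul_tmul, one_mul, mul_one]
    ring
end

section
/- For k-algebra homomorphisms f, g : B → C we have f ∼ g if and only if the k-algebra map {f,g} : B ⊗ B → C given by a ⊗ b ↦ f(a)·g(b) annihilates J², where J is the kernel of the multiplication map B ⊗ B → B. -/
open TensorProduct

theorem Ideal.span_sq_le_iff {R : Type*} [CommSemiring R] (s : Set R) (I : Ideal R) :
    Ideal.span s ^ 2 ≤ I ↔ ∀ x ∈ s, ∀ y ∈ s, x * y ∈ I := by
  rw [pow_two, Ideal.span_mul_span', Ideal.span_le, Set.mul_subset_iff]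
  rfl

section

variable {k B C : Type*} [CommRing k] [CommRing B] [CommRing C] [Algebra k B] [Algebra k C]

theorem Algebra.TensorProduct.productMap_one_tmul_sub_tmul_one (f g : B →ₐ[k] C) (a : B) :
    productMap f g ((1 : B) ⊗ₜ[k] a - a ⊗ₜ[k] (1 : B)) = g a - f a := by
  simp

theorem KaehlerDifferential.ideal_sq_le_ker_productMap_iff (f g : B →ₐ[k] C) :
    KaehlerDifferential.ideal k B ^ 2 ≤ RingHom.ker (Algebra.TensorProduct.productMap f g) ↔
      ∀ a b : B, (f a - g a) * (f b - g b) = 0 := by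
  rw [← KaehlerDifferential.span_range_eq_ideal, Ideal.span_sq_le_iff]
  simp only [Set.forall_mem_range, RingHom.mem_ker, map_mul,
    Algebra.TensorProduct.productMap_one_tmul_sub_tmul_one]
  exact forall₂_congr fun a b ↦ by rw [← neg_sub (f a), ← neg_sub (f b), neg_mul_neg]

end

theorem stmt_9 (k B C : Type*) [CommRing k] [CommRing B] [CommRing C]
    [Algebra k B] [Algebra k C] (f g : B →ₐ[k] C) :
    (∀ a b : B, (f a - g a) * (f b - g b) = 0) ↔
    (∀ x ∈ (RingHom.ker (Algebra.TensorProduct.lmul' k (S := B)).toRingHom) ^ 2,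
      Algebra.TensorProduct.productMap f g x = 0) :=
  -- `KaehlerDifferential.ideal k B` is by definition the kernel of `lmul'`.
  (KaehlerDifferential.ideal_sq_le_ker_productMap_iff f g).symm
end

section
/- Two k-algebra maps a, b : k[X₁,…,Xₙ] → C are neighbours if and only if (b(Xᵢ) − a(Xᵢ))·(b(Xⱼ) − a(Xⱼ)) = 0 in C for all i, j = 1,…,n. -/
open MvPolynomial

theorem stmt_13 (k C : Type*) [CommRing k] [CommRing C] [Algebra k C] (n : ℕ)
    (a b : MvPolynomial (Fin n) k →ₐ[k] C) :
    (∀ p q : MvPolynomial (Fin n) k, (a p - b p) * (a q - b q) = 0) ↔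
    (∀ i j : Fin n, (b (X i) - a (X i)) * (b (X j) - a (X j)) = 0) := by
  constructor
  · intro h i j
    have := h (X i) (X j)
    ring_nf
    ring_nf at this
    linear_combination this
  · intro h
    set I : Ideal C := Ideal.span (Set.range fun i => a (X i) - b (X i)) with hI
    have hmem : ∀ p : MvPolynomial (Fin n) k, a p - b p ∈ I := by
      intro p
      induction p using MvPolynomial.induction_on with
      | C c => simp [AlgHom.commutes]
      | add p q hp hq =>
        have : a (p + q) - b (p + q) = (a p - b p) + (a q - b q) := by
          simp [map_add]; ring
        rw [this]; exact I.add_mem hp hq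
      | mul_X p i hp =>
        have : a (p * X i) - b (p * X i)
            = a p * (a (X i) - b (X i)) + b (X i) * (a p - b p) := by
          simp [map_mul]; ring
        rw [this]
        exact I.add_mem
          (I.mul_mem_left _ (Ideal.subset_span ⟨i, rfl⟩))
          (I.mul_mem_left _ hp)
    intro p q
    have hsq : I * I ≤ ⊥ := by
      rw [Submodule.mul_le]
      intro x hx y hy
      refine Submodule.span_induction ?_ ?_ ?_ ?_ hx
      · rintro x ⟨i, rfl⟩
        refine Submodule.span_induction ?_ ?_ ?_ ?_ hy
        · rintro y ⟨j, rfl⟩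
          have := h i j
          simp only [Ideal.mem_bot]
          linear_combination this
        · simp
        · intro y z _ _ hy hz
          simp only [Ideal.mem_bot] at *
          rw [mul_add, hy, hz, add_zero]
        · intro c y _ hy
          simp only [Ideal.mem_bot] at *
          rw [mul_smul_comm, hy, smul_zero]
      · simp
      · intro x' z _ _ hx' hz
        simp only [Ideal.mem_bot] at *
        rw [add_mul, hx', hz, add_zero]
      · intro c x' _ hx'
        simp only [Ideal.mem_bot] at *
        rw [smul_mul_assoc, hx', smul_zero]
    have := hsq (Submodule.mul_mem_mul (hmem p) (hmem q))
    simpa using this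
end

section
/- Let f₀,…,f_p : B → C be k-algebra homomorphisms that are pairwise neighbours, and let t₀,…,t_p ∈ C with t₀ + … + t_p = 1. Then the k-linear map Σᵢ tᵢ·fᵢ : B → C is a k-algebra homomorphism. -/
private lemma antisym_sum_zero {C : Type*} [AddCommGroup C] {n : ℕ}
    (E : Fin n → Fin n → C) (h : ∀ i j, E i j + E j i = 0) (hd : ∀ i, E i i = 0) :
    ∑ i, ∑ j, E i j = 0 := by
  have : ∑ x : Fin n × Fin n, E x.1 x.2 = 0 := by
    apply Finset.sum_ninvolution (g := fun x => (x.2, x.1))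
    · exact fun a => h a.1 a.2
    · intro a ha
      intro hc
      apply ha
      have : a.2 = a.1 := congrArg Prod.fst hc
      rw [show a.1 = a.2 from this.symm]
      exact hd a.2
    · intro a; exact Finset.mem_univ _
    · intro a; rfl
  rwa [Fintype.sum_prod_type] at this

theorem stmt_15 (k B C : Type*) [CommRing k] [CommRing B] [CommRing C]
    [Algebra k B] [Algebra k C] (p : ℕ) (f : Fin (p + 1) → (B →ₐ[k] C))
    (hnb : ∀ i j, ∀ a b : B, (f i a - f j a) * (f i b - f j b) = 0)
    (t : Fin (p + 1) → C) (ht : ∑ i, t i = 1) :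
    ∃ g : B →ₐ[k] C, ∀ a : B, g a = ∑ i, t i * f i a := by
  have key : ∀ a b : B, (∑ i, t i * f i a) * (∑ j, t j * f j b) = ∑ i, t i * f i (a * b) := by
    intro a b
    have expand : (∑ i, t i * f i a) * (∑ j, t j * f j b)
        = ∑ i, ∑ j, t i * t j * (f i a * f j b) := by
      rw [Finset.sum_mul_sum]; congr 1; ext i; congr 1; ext j; ring
    have rhs : ∑ i, t i * f i (a * b) = ∑ i, ∑ j, t i * t j * (f i a * f i b) := by
      have : ∑ i, t i * f i (a * b) = (∑ i, t i * f i (a * b)) * ∑ j, t j := by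
        rw [ht, mul_one]
      rw [this, Finset.sum_mul]
      congr 1; ext i
      rw [Finset.mul_sum]
      congr 1; ext j
      rw [map_mul]; ring
    rw [expand, rhs]
    have := antisym_sum_zero (fun i j => t i * t j * (f i a * f j b) - t i * t j * (f i a * f i b))
      (fun i j => by linear_combination (-(t i * t j)) * hnb i j a b)
      (fun i => by ring)
    rw [← sub_eq_zero, ← Finset.sum_sub_distrib]
    simpa [Finset.sum_sub_distrib] using this
  refine ⟨{ toFun := fun a => ∑ i, t i * f i a
            map_one' := by simp only [map_one, mul_one, ht]
            map_mul' := fun a b => (key a b).symm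
            map_zero' := by simp
            map_add' := fun a b => by
              show ∑ i, t i * f i (a + b) = (∑ i, t i * f i a) + ∑ i, t i * f i b
              rw [← Finset.sum_add_distrib]
              exact Finset.sum_congr rfl fun i _ => by rw [map_add]; ring
            commutes' := fun r => by
              simp only [AlgHom.commutes]
              rw [← Finset.sum_mul, ht, one_mul] }, fun a => rfl⟩
end

section
/- Let f₀,…,f_p : B → C be pairwise neighbour k-algebra homomorphisms. Then any two affine combinations Σᵢ tᵢ·fᵢ and Σⱼ sⱼ·fⱼ (with tᵢ, sⱼ ∈ C, Σ tᵢ = Σ sⱼ = 1) are neighbours, i.e. (Σᵢ tᵢ·fᵢ(a) − Σⱼ sⱼ·fⱼ(a))·(Σᵢ tᵢ·fᵢ(b) − Σⱼ sⱼ·fⱼ(b)) = 0 for all a, b ∈ B. -/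
theorem stmt_16 (k B C : Type*) [CommRing k] [CommRing B] [CommRing C]
    [Algebra k B] [Algebra k C] (p : ℕ) (f : Fin (p + 1) → (B →ₐ[k] C))
    (hnb : ∀ i j, ∀ a b : B, (f i a - f j a) * (f i b - f j b) = 0)
    (t s : Fin (p + 1) → C) (ht : ∑ i, t i = 1) (hs : ∑ i, s i = 1) :
    ∀ a b : B, ((∑ i, t i * f i a) - ∑ j, s j * f j a) *
      ((∑ i, t i * f i b) - ∑ j, s j * f j b) = 0 := by
  intro a b
  set r : Fin (p + 1) → C := fun i => t i - s i with hr_def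
  have hr : ∑ i, r i = 0 := by
    simp only [hr_def, Finset.sum_sub_distrib, ht, hs, sub_self]
  have hdiff : ∀ c : B, ((∑ i, t i * f i c) - ∑ j, s j * f j c)
      = ∑ i, r i * (f i c - f 0 c) := by
    intro c
    have : ∑ i, r i * (f i c - f 0 c)
        = (∑ i, r i * f i c) - (∑ i, r i) * f 0 c := by
      rw [Finset.sum_mul, ← Finset.sum_sub_distrib]
      exact Finset.sum_congr rfl (fun i _ => by ring)
    rw [this, hr, zero_mul, sub_zero]
    rw [← Finset.sum_sub_distrib]
    exact Finset.sum_congr rfl (fun i _ => by simp [hr_def]; ring)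
  rw [hdiff a, hdiff b, Finset.sum_mul_sum, ← Finset.sum_product']
  have key : ∀ i j : Fin (p + 1),
      (f i a - f 0 a) * (f j b - f 0 b) + (f j a - f 0 a) * (f i b - f 0 b) = 0 := by
    intro i j
    linear_combination hnb i 0 a b + hnb j 0 a b - hnb i j a b
  refine Finset.sum_involution (fun q _ => q.swap) ?_ ?_ (fun q hq => Finset.mem_univ _)
    (fun q hq => rfl)
  · rintro ⟨i, j⟩ hq
    simp only [Prod.swap_prod_mk]
    linear_combination (r i * r j) * key i j
  · rintro ⟨i, j⟩ hq hne heq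
    apply hne
    have hij : i = j := congrArg Prod.snd heq
    subst hij
    have h0 : (f i a - f 0 a) * (f i b - f 0 b) = 0 := hnb i 0 a b
    linear_combination (r i * r i) * h0
end

section
/- Let a : {0,…,p} × {1,…,n} → C be a matrix with a₀ⱼ = 0 for all j. Then the rows form an infinitesimal p-simplex (i.e., (a_{ij} − a_{i'j})·(a_{ij'} − a_{i'j'}) = 0 for all i, i' ∈ {0,…,p} and j, j' ∈ {1,…,n}) if and only if both: (1) a_{ij}·a_{ij'} = 0 for all i ∈ {1,…,p} and j, j' ∈ {1,…,n}, and (2) a_{ij}·a_{i'j'} + a_{i'j}·a_{ij'} = 0 for all i, i' ∈ {1,…,p} and j, j' ∈ {1,…,n}. -/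
theorem stmt_18 (C : Type*) [CommRing C] (p n : ℕ)
    (a : Fin (p + 1) → Fin n → C) (h0 : ∀ j, a 0 j = 0) :
    (∀ i i' : Fin (p + 1), ∀ j j' : Fin n,
        (a i j - a i' j) * (a i j' - a i' j') = 0) ↔
    ((∀ i : Fin (p + 1), i ≠ 0 → ∀ j j' : Fin n, a i j * a i j' = 0) ∧
     (∀ i i' : Fin (p + 1), i ≠ 0 → i' ≠ 0 → ∀ j j' : Fin n,
        a i j * a i' j' + a i' j * a i j' = 0)) := by
  constructor
  · intro h
    constructor
    · intro i _ j j'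
      have := h i 0 j j'
      simp [h0] at this
      exact this
    · intro i i' _ _ j j'
      have h1 := h i i' j j'
      have h2 := h i 0 j j'
      have h3 := h i' 0 j j'
      simp [h0] at h2 h3
      linear_combination h2 + h3 - h1
  · rintro ⟨h1, h2⟩ i i' j j'
    by_cases hi : i = 0 <;> by_cases hi' : i' = 0
    · simp [hi, hi', h0]
    · have := h1 i' hi' j j'
      simp [hi, h0]
      linear_combination this
    · have := h1 i hi j j'
      simp [hi', h0]
      linear_combination this
    · have a1 := h1 i hi j j'
      have a2 := h1 i' hi' j j'
      have a3 := h2 i i' hi hi' j j'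
      linear_combination a1 + a2 - a3
end
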